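/- arXiv:1810.09728 — 2 statements merged into one kernel-verified Lean document; each statement's English description precedes it below -/
import Mathlib

section
/- Let G be a connected graph and e = {u,v} a bridge of G, with G₁ and G₂ the two connected components of G - e. Then T(G) = T(G₁) + T(G₂) - 1. -/
/-!
Deleting the bridge `uv` leaves the components `A ∋ u` and `B ∋ v`. A cycle, or a path between
two vertices on the same side, never crosses the bridge, since it would have to cross it twice.
Hence a tree of `G` meeting both sides contains `u`, its parts in `A` and in `B` are trees, and
the trees of an optimal cover of `G` restrict to tree covers of `A` and `B` with at most one extra
tree in total. Conversely, optimal covers of `A` and `B` together cover `G`, and the tree through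
`u` and the tree through `v` merge along the bridge into a single tree.
-/

open SimpleGraph

/-- A tree cover of `G`: vertex-disjoint induced subtrees covering all vertices. -/
def IsTreeCover {V : Type} (G : SimpleGraph V) (C : Finset (Set V)) : Prop :=
  (∀ s ∈ C, (G.induce s).IsTree) ∧ (∀ v : V, ∃ s ∈ C, v ∈ s) ∧
    (C : Set (Set V)).PairwiseDisjoint id

/-- The tree cover number: minimum cardinality of a tree cover. -/
noncomputable def treeCoverNumber {V : Type} (G : SimpleGraph V) : ℕ :=
  sInf {n | ∃ C : Finset (Set V), IsTreeCover G C ∧ C.card = n}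

section TreeCover

variable {V : Type} {G : SimpleGraph V} {S : Set V} {C : Finset (Set V)}

/-- Tree covers of `G[S]`, with the trees kept as subsets of `V`. -/
def IsTreeCoverOn (G : SimpleGraph V) (S : Set V) (C : Finset (Set V)) : Prop :=
  (∀ s ∈ C, s ⊆ S ∧ (G.induce s).IsTree) ∧ (∀ x ∈ S, ∃ s ∈ C, x ∈ s) ∧
    (C : Set (Set V)).PairwiseDisjoint id

lemma isTreeCoverOn_univ : IsTreeCoverOn G Set.univ C ↔ IsTreeCover G C := by
  simp [IsTreeCoverOn, IsTreeCover]

noncomputable def SimpleGraph.induceInduceIso (G : SimpleGraph V) (S : Set V) (t : Set S) :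
    (G.induce S).induce t ≃g G.induce (Subtype.val '' t) where
  toEquiv := Equiv.Set.image Subtype.val t Subtype.val_injective
  map_rel_iff' := Iff.rfl

open Classical in
lemma IsTreeCover.isTreeCoverOn_image {C : Finset (Set S)} (hC : IsTreeCover (G.induce S) C) :
    IsTreeCoverOn G S (C.image (Subtype.val '' ·)) := by
  refine ⟨?_, fun x hx => ?_, ?_⟩
  · simp only [Finset.mem_image, forall_exists_index, and_imp, forall_apply_eq_imp_iff₂]
    exact fun t ht =>
      ⟨Subtype.coe_image_subset S t, (G.induceInduceIso S t).isTree_iff.1 (hC.1 t ht)⟩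
  · obtain ⟨t, ht, hxt⟩ := hC.2.1 ⟨x, hx⟩
    exact ⟨_, Finset.mem_image_of_mem _ ht, ⟨x, hx⟩, hxt, rfl⟩
  · rw [Finset.coe_image]
    rintro _ ⟨t, ht, rfl⟩ _ ⟨t', ht', rfl⟩ hne
    exact Set.disjoint_image_of_injective Subtype.val_injective
      (hC.2.2 ht ht' fun h => hne (h ▸ rfl))

open Classical in
lemma IsTreeCoverOn.isTreeCover_preimage (hC : IsTreeCoverOn G S C) :
    IsTreeCover (G.induce S) (C.image (Subtype.val ⁻¹' ·)) := by
  refine ⟨?_, fun x => ?_, ?_⟩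
  · simp only [Finset.mem_image, forall_exists_index, and_imp, forall_apply_eq_imp_iff₂]
    intro s hs
    rw [(G.induceInduceIso S _).isTree_iff, Subtype.image_preimage_coe,
      Set.inter_eq_right.2 (hC.1 s hs).1]
    exact (hC.1 s hs).2
  · obtain ⟨s, hs, hxs⟩ := hC.2.1 x x.2
    exact ⟨_, Finset.mem_image_of_mem _ hs, hxs⟩
  · rw [Finset.coe_image]
    rintro _ ⟨s, hs, rfl⟩ _ ⟨s', hs', rfl⟩ hne
    exact (hC.2.2 hs hs' fun h => hne (h ▸ rfl)).preimage _

lemma treeCoverNumber_le (hC : IsTreeCover G C) : treeCoverNumber G ≤ C.card :=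
  Nat.sInf_le ⟨C, hC, rfl⟩

lemma exists_isTreeCover_card_eq [Finite V] (G : SimpleGraph V) :
    ∃ C, IsTreeCover G C ∧ C.card = treeCoverNumber G := by
  classical
  have := Fintype.ofFinite V
  have hsingletons : IsTreeCover G (Finset.univ.image ({·})) := by
    refine ⟨?_, fun x => ⟨{x}, Finset.mem_image_of_mem _ (Finset.mem_univ x), rfl⟩, ?_⟩
    · simp only [Finset.mem_image, Finset.mem_univ, true_and, forall_exists_index,
        forall_apply_eq_imp_iff]
      exact fun _ => IsTree.of_subsingleton
    · rw [Finset.coe_image]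
      rintro _ ⟨x, -, rfl⟩ _ ⟨y, -, rfl⟩ hne
      exact Set.disjoint_singleton.2 fun h => hne (h ▸ rfl)
  exact Nat.sInf_mem (s := {n | ∃ C, IsTreeCover G C ∧ C.card = n}) ⟨_, _, hsingletons, rfl⟩

lemma treeCoverNumber_induce_le (hC : IsTreeCoverOn G S C) :
    treeCoverNumber (G.induce S) ≤ C.card := by
  classical
  exact (treeCoverNumber_le hC.isTreeCover_preimage).trans Finset.card_image_le

lemma exists_isTreeCoverOn_card_eq [Finite V] (G : SimpleGraph V) (S : Set V) :
    ∃ C, IsTreeCoverOn G S C ∧ C.card = treeCoverNumber (G.induce S) := by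
  classical
  obtain ⟨C, hC, hcard⟩ := exists_isTreeCover_card_eq (G.induce S)
  refine ⟨_, hC.isTreeCoverOn_image, ?_⟩
  rw [Finset.card_image_of_injective _ (Set.image_injective.2 Subtype.val_injective), hcard]

open Classical in
lemma IsTreeCoverOn.union {T : Set V} {D : Finset (Set V)} (hC : IsTreeCoverOn G S C)
    (hD : IsTreeCoverOn G T D) (hST : Disjoint S T) : IsTreeCoverOn G (S ∪ T) (C ∪ D) := by
  refine ⟨fun s hs => ?_, ?_, ?_⟩
  · rcases Finset.mem_union.1 hs with hs | hs
    · exact ⟨(hC.1 s hs).1.trans Set.subset_union_left, (hC.1 s hs).2⟩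
    · exact ⟨(hD.1 s hs).1.trans Set.subset_union_right, (hD.1 s hs).2⟩
  · rintro x (hx | hx)
    · obtain ⟨s, hs, hxs⟩ := hC.2.1 x hx
      exact ⟨s, Finset.mem_union_left _ hs, hxs⟩
    · obtain ⟨s, hs, hxs⟩ := hD.2.1 x hx
      exact ⟨s, Finset.mem_union_right _ hs, hxs⟩
  · rw [Finset.coe_union, Set.pairwiseDisjoint_union]
    exact ⟨hC.2.2, hD.2.2, fun s hs t ht _ => hST.mono (hC.1 s hs).1 (hD.1 t ht).1⟩

lemma IsTreeCoverOn.exists_merge {s t : Set V} (hC : IsTreeCoverOn G S C) (hs : s ∈ C)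
    (ht : t ∈ C) (hst : s ≠ t) (htree : (G.induce (s ∪ t)).IsTree) :
    ∃ D, IsTreeCoverOn G S D ∧ D.card + 1 ≤ C.card := by
  classical
  set R := (C.erase s).erase t
  have hR : ∀ r ∈ R, r ∈ C ∧ r ≠ s ∧ r ≠ t := fun r hr => by
    simp only [R, Finset.mem_erase] at hr
    exact ⟨hr.2.2, hr.2.1, hr.1⟩
  refine ⟨insert (s ∪ t) R, ⟨?_, fun x hx => ?_, ?_⟩, ?_⟩
  · simp only [Finset.mem_insert, forall_eq_or_imp]
    exact ⟨⟨Set.union_subset (hC.1 s hs).1 (hC.1 t ht).1, htree⟩,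
      fun r hr => hC.1 r (hR r hr).1⟩
  · obtain ⟨r, hr, hxr⟩ := hC.2.1 x hx
    by_cases hrs : r = s
    · exact ⟨s ∪ t, Finset.mem_insert_self _ _, Or.inl (hrs ▸ hxr)⟩
    by_cases hrt : r = t
    · exact ⟨s ∪ t, Finset.mem_insert_self _ _, Or.inr (hrt ▸ hxr)⟩
    exact ⟨r, Finset.mem_insert_of_mem (by simp [R, hr, hrs, hrt]), hxr⟩
  · rw [Finset.coe_insert, Set.pairwiseDisjoint_insert]
    refine ⟨hC.2.2.subset fun r hr => (hR r hr).1, fun r hr _ => ?_⟩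
    obtain ⟨hrC, hrs, hrt⟩ := hR r hr
    exact Set.disjoint_union_left.2 ⟨hC.2.2 hs hrC (Ne.symm hrs), hC.2.2 ht hrC (Ne.symm hrt)⟩
  · have hR' : R.card + 1 = (C.erase s).card :=
      Finset.card_erase_add_one (Finset.mem_erase.2 ⟨Ne.symm hst, ht⟩)
    have hC' := Finset.card_erase_add_one hs
    have := Finset.card_insert_le (s ∪ t) R
    omega

open Classical in
lemma IsTreeCover.isTreeCoverOn_inter {A : Set V} (hC : IsTreeCover G C)
    (hA : ∀ s ∈ C, (s ∩ A).Nonempty → (G.induce (s ∩ A)).IsTree) :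
    IsTreeCoverOn G A ((C.filter fun s => (s ∩ A).Nonempty).image (· ∩ A)) := by
  refine ⟨?_, fun x hx => ?_, ?_⟩
  · simp only [Finset.mem_image, Finset.mem_filter, forall_exists_index, and_imp]
    rintro _ s hs hne rfl
    exact ⟨Set.inter_subset_right, hA s hs hne⟩
  · obtain ⟨s, hs, hxs⟩ := hC.2.1 x
    exact ⟨s ∩ A, Finset.mem_image_of_mem _ (Finset.mem_filter.2 ⟨hs, x, hxs, hx⟩), hxs, hx⟩
  · rw [Finset.coe_image]
    rintro _ ⟨s, hs, rfl⟩ _ ⟨t, ht, rfl⟩ hne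
    exact (hC.2.2 (Finset.mem_filter.1 hs).1 (Finset.mem_filter.1 ht).1
      fun h => hne (h ▸ rfl)).mono Set.inter_subset_left Set.inter_subset_left

open Classical in
lemma IsTreeCover.card_filter_mem_le_one (hC : IsTreeCover G C) (x : V) :
    (C.filter (x ∈ ·)).card ≤ 1 :=
  Finset.card_le_one.2 fun _ hs _ ht => hC.2.2.elim_set (Finset.mem_filter.1 hs).1
    (Finset.mem_filter.1 ht).1 x (Finset.mem_filter.1 hs).2 (Finset.mem_filter.1 ht).2

end TreeCover

namespace SimpleGraph

variable {V : Type} {G : SimpleGraph V} {e : Sym2 V} {s t : Set V} {u v x y z : V}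

/-- A trail cannot leave a component of `G` minus `e` and come back: it would use `e` twice. -/
lemma Walk.IsTrail.reachable_deleteEdges_of_mem_support {p : G.Walk x y} (hp : p.IsTrail)
    (hxy : (G.deleteEdges {e}).Reachable x y) (hz : z ∈ p.support) :
    (G.deleteEdges {e}).Reachable x z := by
  classical
  by_contra hxz
  have hzy : ¬ (G.deleteEdges {e}).Reachable z y := fun hzy => hxz (hxy.trans hzy.symm)
  exact hp.disjoint_edges_takeUntil_dropUntil hz
    ((p.takeUntil z hz).mem_edges_of_not_reachable_deleteEdges hxz)
    ((p.dropUntil z hz).mem_edges_of_not_reachable_deleteEdges hzy)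

lemma Walk.mem_of_mem_support_map_induce {x y : s} {p : (G.induce s).Walk x y}
    (hz : z ∈ (p.map (Embedding.induce s).toHom).support) : z ∈ s := by
  rw [Walk.support_map, List.mem_map] at hz
  obtain ⟨w, -, rfl⟩ := hz
  exact w.2

lemma IsTree.induce_inter_supp (hs : (G.induce s).IsTree)
    (c : (G.deleteEdges {e}).ConnectedComponent) (hne : (s ∩ c.supp).Nonempty) :
    (G.induce (s ∩ c.supp)).IsTree := by
  have hle : s ∩ c.supp ⊆ s := Set.inter_subset_left
  refine ⟨(connected_iff _).2 ⟨?_, hne.to_subtype⟩,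
    hs.isAcyclic.comap (G.induceHomOfLE hle).toHom (G.induceHomOfLE hle).injective⟩
  rintro ⟨x, hxs, hxc⟩ ⟨y, hys, hyc⟩
  obtain ⟨p, hp⟩ := (hs.existsUnique_path ⟨x, hxs⟩ ⟨y, hys⟩).exists
  set q := p.map (Embedding.induce (G := G) s).toHom
  have hq : q.IsTrail := (hp.map (Embedding.induce (G := G) s).injective).isTrail
  have hxy : (G.deleteEdges {e}).Reachable x y := c.reachable_of_mem_supp hxc hyc
  have hsupp : ∀ z ∈ q.support, z ∈ s ∩ c.supp := fun z hz => by
    refine ⟨Walk.mem_of_mem_support_map_induce hz, ?_⟩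
    exact (ConnectedComponent.sound (hq.reachable_deleteEdges_of_mem_support hxy hz)).symm.trans hxc
  exact ⟨q.induce _ hsupp⟩

lemma Preconnected.mem_of_not_reachable_deleteEdges (hs : (G.induce s).Preconnected)
    (hx : x ∈ s) (hy : y ∈ s) (hxy : ¬ (G.deleteEdges {s(u, v)}).Reachable x y) : u ∈ s := by
  obtain ⟨p⟩ := hs ⟨x, hx⟩ ⟨y, hy⟩
  set q := p.map (Embedding.induce (G := G) s).toHom
  exact Walk.mem_of_mem_support_map_induce
    (q.fst_mem_support_of_mem_edges (q.mem_edges_of_not_reachable_deleteEdges hxy))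

/-- Every cycle of `G` stays inside one component of `G` minus `e`. -/
lemma isAcyclic_induce_union (hst : ∀ x ∈ s, ∀ y ∈ t, ¬ (G.deleteEdges {e}).Reachable x y)
    (hs : (G.induce s).IsAcyclic) (ht : (G.induce t).IsAcyclic) :
    (G.induce (s ∪ t)).IsAcyclic := by
  intro w c hc
  set c' := c.map (Embedding.induce (G := G) (s ∪ t)).toHom
  have hc' : c'.IsCycle := hc.map (Embedding.induce (G := G) (s ∪ t)).injective
  have hmem : ∀ z ∈ c'.support, z ∈ s ∪ t := fun z => Walk.mem_of_mem_support_map_induce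
  have hreach : ∀ z ∈ c'.support, (G.deleteEdges {e}).Reachable w z := fun z hz =>
    hc'.isTrail.reachable_deleteEdges_of_mem_support (Reachable.refl _) hz
  have not_within : ∀ r : Set V, (G.induce r).IsAcyclic → ¬ ∀ z ∈ c'.support, z ∈ r :=
    fun r hr hsub => hr (c'.induce r hsub)
      ((Walk.isCycle_map_iff_of_injective (Embedding.induce (G := G) r).injective).1
        (by rwa [Walk.map_induce]))
  rcases w.2 with hw | hw
  · exact not_within s hs fun z hz =>
      (hmem z hz).resolve_right fun hzt => hst w hw z hzt (hreach z hz)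
  · exact not_within t ht fun z hz =>
      (hmem z hz).resolve_left fun hzs => hst z hzs w hw (hreach z hz).symm

lemma isTree_induce_union (hs : (G.induce s).IsTree) (ht : (G.induce t).IsTree)
    (hu : u ∈ s) (hv : v ∈ t) (huv : G.Adj u v)
    (hst : ∀ x ∈ s, ∀ y ∈ t, ¬ (G.deleteEdges {e}).Reachable x y) :
    (G.induce (s ∪ t)).IsTree :=
  ⟨connected_induce_union hs.connected.preconnected ht.connected.preconnected hu hv huv,
    isAcyclic_induce_union hst hs.isAcyclic ht.isAcyclic⟩

lemma Connected.reachable_deleteEdges_or (hG : G.Connected) (u v x : V) :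
    (G.deleteEdges {s(u, v)}).Reachable u x ∨ (G.deleteEdges {s(u, v)}).Reachable v x := by
  classical
  obtain ⟨P, hP⟩ := hG.exists_isPath x u
  by_cases he : s(u, v) ∈ P.edges
  · have hvP := P.snd_mem_support_of_mem_edges he
    have huP := Walk.endpoint_notMem_support_takeUntil hP hvP (P.adj_of_mem_edges he).ne
    exact Or.inr (reachable_deleteEdges_iff_exists_walk.2
      ⟨P.takeUntil v hvP, fun h => huP ((P.takeUntil v hvP).fst_mem_support_of_mem_edges h)⟩).symm
  · exact Or.inl (reachable_deleteEdges_iff_exists_walk.2 ⟨P, he⟩).symm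

lemma induce_supp_deleteEdges (huv : ¬ (G.deleteEdges {s(u, v)}).Reachable u v)
    (c : (G.deleteEdges {s(u, v)}).ConnectedComponent) :
    (G.deleteEdges {s(u, v)}).induce c.supp = G.induce c.supp := by
  ext x y
  simp only [comap_adj, Function.Embedding.subtype_apply, deleteEdges_adj,
    Set.mem_singleton_iff, and_iff_left_iff_imp]
  intro _ hxy
  have hr := c.reachable_of_mem_supp x.2 y.2
  rcases Sym2.eq_iff.1 hxy with ⟨hx, hy⟩ | ⟨hx, hy⟩
  · exact huv (by rwa [hx, hy] at hr)
  · exact huv (by rwa [hx, hy, reachable_comm] at hr)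

end SimpleGraph

section Bridge

variable {V : Type} {G : SimpleGraph V} {u v : V}

lemma le_treeCoverNumber_add_one [Finite V] {c c' : (G.deleteEdges {s(u, v)}).ConnectedComponent}
    (hcc : c ≠ c') :
    treeCoverNumber (G.induce c.supp) + treeCoverNumber (G.induce c'.supp) ≤
      treeCoverNumber G + 1 := by
  classical
  obtain ⟨C, hC, hcard⟩ := exists_isTreeCover_card_eq G
  have hcover (d : (G.deleteEdges {s(u, v)}).ConnectedComponent) :=
    hC.isTreeCoverOn_inter fun s hs => (hC.1 s hs).induce_inter_supp d
  have hboth : (C.filter fun s => (s ∩ c.supp).Nonempty ∧ (s ∩ c'.supp).Nonempty) ⊆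
      C.filter (u ∈ ·) := by
    simp only [Finset.subset_iff, Finset.mem_filter]
    rintro s ⟨hs, ⟨x, hxs, hx⟩, ⟨y, hys, hy⟩⟩
    refine ⟨hs, (hC.1 s hs).connected.preconnected.mem_of_not_reachable_deleteEdges (v := v) hxs
      hys fun hxy => hcc ?_⟩
    rw [← hx, ← hy, ConnectedComponent.eq]
    exact hxy
  calc treeCoverNumber (G.induce c.supp) + treeCoverNumber (G.induce c'.supp)
      ≤ (C.filter fun s => (s ∩ c.supp).Nonempty).card +
          (C.filter fun s => (s ∩ c'.supp).Nonempty).card :=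
        add_le_add ((treeCoverNumber_induce_le (hcover c)).trans Finset.card_image_le)
          ((treeCoverNumber_induce_le (hcover c')).trans Finset.card_image_le)
    _ = (C.filter fun s => (s ∩ c.supp).Nonempty ∨ (s ∩ c'.supp).Nonempty).card +
          (C.filter fun s => (s ∩ c.supp).Nonempty ∧ (s ∩ c'.supp).Nonempty).card := by
        rw [Finset.filter_or, Finset.filter_and, Finset.card_union_add_card_inter]
    _ ≤ C.card + 1 := add_le_add (Finset.card_filter_le _ _)
        ((Finset.card_le_card hboth).trans (hC.card_filter_mem_le_one u))
    _ = treeCoverNumber G + 1 := by rw [hcard]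

lemma treeCoverNumber_add_one_le [Finite V] (hG : G.Connected) (hadj : G.Adj u v)
    (huv : ¬ (G.deleteEdges {s(u, v)}).Reachable u v) :
    treeCoverNumber G + 1 ≤
      treeCoverNumber (G.induce ((G.deleteEdges {s(u, v)}).connectedComponentMk u).supp) +
        treeCoverNumber (G.induce ((G.deleteEdges {s(u, v)}).connectedComponentMk v).supp) := by
  classical
  set G' := G.deleteEdges {s(u, v)}
  obtain ⟨C₁, hC₁, hcard₁⟩ := exists_isTreeCoverOn_card_eq G (G'.connectedComponentMk u).supp
  obtain ⟨C₂, hC₂, hcard₂⟩ := exists_isTreeCoverOn_card_eq G (G'.connectedComponentMk v).supp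
  obtain ⟨t₁, ht₁, hut₁⟩ := hC₁.2.1 u rfl
  obtain ⟨t₂, ht₂, hvt₂⟩ := hC₂.2.1 v rfl
  have hsep : ∀ x ∈ t₁, ∀ y ∈ t₂, ¬ G'.Reachable x y := fun x hx y hy hxy => by
    refine huv (ConnectedComponent.exact ?_)
    rw [← (hC₁.1 t₁ ht₁).1 hx, ← (hC₂.1 t₂ ht₂).1 hy]
    exact ConnectedComponent.sound hxy
  have hcover : IsTreeCoverOn G Set.univ (C₁ ∪ C₂) := by
    have hdisj := G'.pairwise_disjoint_supp_connectedComponent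
      fun h => huv (ConnectedComponent.exact h)
    convert hC₁.union hC₂ hdisj
    refine (Set.eq_univ_of_forall fun x => ?_).symm
    exact (hG.reachable_deleteEdges_or u v x).imp (fun h => (ConnectedComponent.sound h).symm)
      fun h => (ConnectedComponent.sound h).symm
  obtain ⟨D, hD, hDcard⟩ := hcover.exists_merge (Finset.mem_union_left _ ht₁)
    (Finset.mem_union_right _ ht₂) (fun h => hsep u hut₁ u (h ▸ hut₁) (Reachable.refl u))
    (isTree_induce_union (hC₁.1 t₁ ht₁).2 (hC₂.1 t₂ ht₂).2 hut₁ hvt₂ hadj hsep)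
  calc treeCoverNumber G + 1 ≤ D.card + 1 := by
        grw [treeCoverNumber_le (isTreeCoverOn_univ.1 hD)]
    _ ≤ C₁.card + C₂.card := hDcard.trans (Finset.card_union_le _ _)
    _ = _ := by rw [hcard₁, hcard₂]

end Bridge

theorem stmt_8 {V : Type} [Fintype V] (G : SimpleGraph V) (hG : G.Connected) (u v : V)
    (hb : G.IsBridge s(u, v)) :
    treeCoverNumber G =
      treeCoverNumber ((G.deleteEdges {s(u, v)}).induce
          ((G.deleteEdges {s(u, v)}).connectedComponentMk u).supp) +
        treeCoverNumber ((G.deleteEdges {s(u, v)}).induce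
          ((G.deleteEdges {s(u, v)}).connectedComponentMk v).supp) - 1 := by
  have huv : ¬ (G.deleteEdges {s(u, v)}).Reachable u v := isBridge_iff.1 hb
  rw [induce_supp_deleteEdges huv, induce_supp_deleteEdges huv]
  have hupper := treeCoverNumber_add_one_le hG (hb.reachable_iff_adj.1 (hG.preconnected u v)) huv
  have hlower := le_treeCoverNumber_add_one
    (c := (G.deleteEdges {s(u, v)}).connectedComponentMk u)
    (c' := (G.deleteEdges {s(u, v)}).connectedComponentMk v)
    fun h => huv (ConnectedComponent.exact h)
  omega
end

section
/- Let G be a connected graph with adjacent vertices u, v such that G' = G - {u,v} is connected. Suppose a minimum tree cover T' of G' contains a tree T_w with exactly two vertices {w, x}, and there exists y ∈ N(w) ∩ N(x) such that the tree T_y of T' containing y satisfies N(x) ∩ V(T_y) = {y}. If u is adjacent to w and v is not adjacent to w, then T(G) ≤ T(G'). -/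
open SimpleGraph

/-!
Keep every tree of the minimum cover of `G - {u, v}` except `T_w = {w, x}` and `T_y`, and
replace these two by `{w, u, v}` and `T_y ∪ {x}`. The first induces the path `w - u - v`, as
`v` and `w` are not adjacent; the second is `T_y` with the leaf `x` attached at `y`, its only
neighbour in `T_y`. Together they cover exactly `T_w ∪ T_y ∪ {u, v}`, so the result is a tree
cover of `G` with as many trees as the original one.
-/

namespace SimpleGraph

variable {V : Type*} {G : SimpleGraph V}

lemma Walk.IsCycle.induce {s : Set V} {u : V} {c : G.Walk u u} (hc : c.IsCycle)
    (hs : ∀ x ∈ c.support, x ∈ s) : (c.induce s hs).IsCycle := by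
  rwa [← isCycle_map_iff_of_injective (f := (Embedding.induce s).toHom) Subtype.val_injective,
    map_induce]

lemma Walk.IsCycle.notMem_support_of_subsingleton_neighborSet {u a : V} {c : G.Walk u u}
    (hc : c.IsCycle) (ha : (G.neighborSet a).Subsingleton) : a ∉ c.support := by
  classical
  intro h
  have hc' := hc.rotate h
  exact hc'.snd_ne_penultimate (ha (adj_snd hc'.not_nil) (adj_penultimate hc'.not_nil).symm)

lemma IsTree.induce_insert {s : Set V} {a y : V} (hs : (G.induce s).IsTree) (ha : a ∉ s)
    (hy : y ∈ s) (hay : G.Adj a y) (hunique : ∀ z ∈ s, G.Adj a z → z = y) :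
    (G.induce (insert a s)).IsTree where
  connected := Set.insert_eq a s ▸ connected_induce_union
    (IsTree.of_subsingleton (G := G.induce {a})).connected.preconnected
    hs.connected.preconnected rfl hy hay
  isAcyclic z c hc := by
    have hleaf : ⟨a, s.mem_insert a⟩ ∉ c.support := by
      refine hc.notMem_support_of_subsingleton_neighborSet ?_
      have hy' : ∀ b : ↥(insert a s), G.Adj a b → (b : V) = y := by
        rintro ⟨b, rfl | hb⟩ hab
        · exact absurd hab G.irrefl
        · exact hunique b hb hab
      intro b hb b' hb'
      exact Subtype.ext ((hy' b hb).trans (hy' b' hb').symm)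
    let f := (Embedding.induce (G := G) (insert a s)).toHom
    have hsupp : ∀ x ∈ (c.map f).support, x ∈ s := by
      simp only [Walk.support_map, List.mem_map]
      rintro _ ⟨⟨x, rfl | hx⟩, hxc, rfl⟩
      exacts [absurd hxc hleaf, hx]
    exact hs.isAcyclic _
      (((Walk.isCycle_map_iff_of_injective Subtype.val_injective).mpr hc).induce hsupp)

lemma isTree_induce_triple {a b c : V} (hab : G.Adj a b) (hac : G.Adj a c) (hbc : ¬ G.Adj b c)
    (hne : b ≠ c) : (G.induce {b, a, c}).IsTree := by
  refine IsTree.induce_insert ?_ ?_ (Set.mem_insert a _) hab.symm ?_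
  · exact (IsTree.of_subsingleton (G := G.induce {c})).induce_insert hac.ne rfl hac
      fun _ hz _ => hz
  · simp [hab.ne.symm, hne]
  · rintro z (rfl | rfl) h
    exacts [rfl, absurd h hbc]

variable (G) in
noncomputable def induceInduceIso_s15 (s : Set V) (t : Set s) :
    (G.induce s).induce t ≃g G.induce (Subtype.val '' t) where
  toEquiv := Equiv.Set.image Subtype.val t Subtype.val_injective
  map_rel_iff' := Iff.rfl

lemma isTree_induce_insert_image_val {S : Set V} {T : Set S}
    (hT : ((G.induce S).induce T).IsTree) {x y : S} (hx : x ∉ T)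
    (hxT : {z | (G.induce S).Adj x z} ∩ T = {y}) :
    (G.induce (insert ↑x (Subtype.val '' T))).IsTree := by
  have hy : y ∈ {z | (G.induce S).Adj x z} ∩ T := hxT ▸ rfl
  refine ((G.induceInduceIso_s15 S T).isTree_iff.mp hT).induce_insert ?_ ⟨y, hy.2, rfl⟩ hy.1 ?_
  · rintro ⟨z, hz, h⟩
    exact hx (Subtype.ext h ▸ hz)
  · rintro _ ⟨z, hz, rfl⟩ hxz
    exact congrArg Subtype.val (hxT.subset ⟨hxz, hz⟩)

end SimpleGraph

theorem treeCoverNumber_le_card {V : Type} {G : SimpleGraph V} {C : Finset (Set V)}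
    (hC : IsTreeCover G C) : treeCoverNumber G ≤ C.card :=
  Nat.sInf_le ⟨C, hC, rfl⟩

theorem IsTreeCover.exchange {V : Type} {G : SimpleGraph V} {S : Set V} {C R : Finset (Set S)}
    [DecidableEq (Set V)] [DecidableEq (Set S)]
    (hC : IsTreeCover (G.induce S) C) (hR : R ⊆ C) {N : Finset (Set V)}
    (hN : ∀ n ∈ N, (G.induce n).IsTree) (hNdisj : (N : Set (Set V)).PairwiseDisjoint id)
    (hunion : ⋃ n ∈ N, n = Sᶜ ∪ ⋃ r ∈ R, Subtype.val '' r) :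
    IsTreeCover G (N ∪ (C \ R).image (Subtype.val '' ·)) := by
  have hdisj {t t' : Set S} (ht : t ∈ C) (ht' : t' ∈ C) (hne : t ≠ t') :
      Disjoint (Subtype.val '' t) (Subtype.val '' t') :=
    (Set.disjoint_image_iff Subtype.val_injective).mpr (hC.2.2 ht ht' hne)
  refine ⟨?_, fun p => ?_, ?_⟩
  · simp only [Finset.mem_union, Finset.mem_image, Finset.mem_sdiff]
    rintro _ (hn | ⟨t, ⟨ht, -⟩, rfl⟩)
    exacts [hN _ hn, (G.induceInduceIso_s15 S t).isTree_iff.mp (hC.1 t ht)]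
  · have hmemN (hp : p ∈ Sᶜ ∪ ⋃ r ∈ R, Subtype.val '' r) :
        ∃ n ∈ N ∪ (C \ R).image (Subtype.val '' ·), p ∈ n := by
      rw [← hunion, Set.mem_iUnion₂] at hp
      obtain ⟨n, hn, hpn⟩ := hp
      exact ⟨n, Finset.mem_union_left _ hn, hpn⟩
    by_cases hpS : p ∈ S
    · obtain ⟨t, ht, hpt⟩ := hC.2.1 ⟨p, hpS⟩
      by_cases htR : t ∈ R
      · exact hmemN (Or.inr (Set.mem_iUnion₂.mpr ⟨t, htR, ⟨p, hpS⟩, hpt, rfl⟩))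
      · exact ⟨_, Finset.mem_union_right _
          (Finset.mem_image_of_mem _ (Finset.mem_sdiff.mpr ⟨ht, htR⟩)), ⟨p, hpS⟩, hpt, rfl⟩
    · exact hmemN (Or.inl hpS)
  · rw [Finset.coe_union, Set.pairwiseDisjoint_union]
    simp only [Finset.coe_image, Finset.coe_sdiff]
    refine ⟨hNdisj, ?_, ?_⟩
    · rintro _ ⟨t, ⟨ht, -⟩, rfl⟩ _ ⟨t', ⟨ht', -⟩, rfl⟩ hne
      exact hdisj ht ht' fun h => hne (h ▸ rfl)
    · rintro n hn _ ⟨t, ⟨ht, htR⟩, rfl⟩ -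
      have hnsub : n ⊆ Sᶜ ∪ ⋃ r ∈ R, Subtype.val '' r :=
        hunion ▸ Set.subset_biUnion_of_mem (u := id) hn
      refine Disjoint.mono_left hnsub (Disjoint.union_left ?_ ?_)
      · exact Set.disjoint_compl_left_iff_subset.mpr (Subtype.coe_image_subset _ _)
      · exact Set.disjoint_iUnion₂_left.mpr fun r hr =>
          hdisj (hR hr) ht (by rintro rfl; exact htR hr)

theorem treeCoverNumber_add_card_le_of_exchange {V : Type} {G : SimpleGraph V} {S : Set V}
    {C R : Finset (Set S)} (hC : IsTreeCover (G.induce S) C) (hR : R ⊆ C) {N : Finset (Set V)}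
    (hN : ∀ n ∈ N, (G.induce n).IsTree) (hNdisj : (N : Set (Set V)).PairwiseDisjoint id)
    (hunion : ⋃ n ∈ N, n = Sᶜ ∪ ⋃ r ∈ R, Subtype.val '' r) :
    treeCoverNumber G + R.card ≤ C.card + N.card := by
  classical
  calc treeCoverNumber G + R.card
      ≤ (N ∪ (C \ R).image (Subtype.val '' ·)).card + R.card :=
        Nat.add_le_add_right (treeCoverNumber_le_card (hC.exchange hR hN hNdisj hunion)) _
    _ ≤ N.card + (C \ R).card + R.card :=
        Nat.add_le_add_right ((Finset.card_union_le _ _).trans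
          (Nat.add_le_add_left Finset.card_image_le _)) _
    _ = C.card + N.card := by rw [add_assoc, Finset.card_sdiff_add_card_eq_card hR, add_comm]

theorem treeCoverNumber_le_of_exchange_pair {V : Type} {G : SimpleGraph V} {S : Set V}
    {C : Finset (Set S)} (hC : IsTreeCover (G.induce S) C) {T₁ T₂ : Set S} (h₁ : T₁ ∈ C)
    (h₂ : T₂ ∈ C) (hne : T₁ ≠ T₂) {A B : Set V} (hA : (G.induce A).IsTree)
    (hB : (G.induce B).IsTree) (hAB : Disjoint A B)
    (hunion : A ∪ B = Sᶜ ∪ (Subtype.val '' T₁ ∪ Subtype.val '' T₂)) :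
    treeCoverNumber G ≤ C.card := by
  classical
  have := treeCoverNumber_add_card_le_of_exchange (N := {A, B}) hC
    (Finset.insert_subset h₁ (Finset.singleton_subset_iff.mpr h₂)) (by simpa using ⟨hA, hB⟩)
    (by rw [Finset.coe_pair]; exact Set.pairwise_pair.mpr fun _ => ⟨hAB, hAB.symm⟩)
    (by simpa only [Finset.mem_insert, Finset.mem_singleton, Set.iUnion_iUnion_eq_or_left,
      Set.iUnion_iUnion_eq_left] using hunion)
  rw [Finset.card_pair hne] at this
  have := Finset.card_le_two (a := A) (b := B)
  omega

theorem stmt_15_general {V : Type} (G : SimpleGraph V) (u v : V)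
    (huv : G.Adj u v)
    (C' : Finset (Set ({u, v}ᶜ : Set V)))
    (hC' : IsTreeCover (G.induce ({u, v}ᶜ : Set V)) C')
    (hmin : C'.card = treeCoverNumber (G.induce ({u, v}ᶜ : Set V)))
    (w x y : ({u, v}ᶜ : Set V)) (Tw Ty : Set ({u, v}ᶜ : Set V))
    (hTw : Tw ∈ C') (hwTw : Tw = {w, x}) (hwx : w ≠ x)
    (hyw : (G.induce ({u, v}ᶜ : Set V)).Adj w y)
    (hyx : (G.induce ({u, v}ᶜ : Set V)).Adj x y)
    (hTy : Ty ∈ C') (hyTy : y ∈ Ty)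
    (hN : {z | (G.induce ({u, v}ᶜ : Set V)).Adj x z} ∩ Ty = {y})
    (huw : G.Adj u ↑w) (hvw : ¬ G.Adj v ↑w) :
    treeCoverNumber G ≤ treeCoverNumber (G.induce ({u, v}ᶜ : Set V)) := by
  have hTwTy : Tw ≠ Ty := by
    rintro rfl
    rcases hwTw ▸ hyTy with h | h
    exacts [hyw.ne h.symm, hyx.ne h.symm]
  have hTwTy_disj : Disjoint Tw Ty := hC'.2.2 hTw hTy hTwTy
  have hA : (G.induce {↑w, u, v}).IsTree :=
    isTree_induce_triple huw huv (fun h => hvw h.symm) (not_or.mp w.2).2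
  have hB : (G.induce (insert ↑x (Subtype.val '' Ty))).IsTree :=
    isTree_induce_insert_image_val (hC'.1 Ty hTy)
      (hTwTy_disj.notMem_of_mem_left (hwTw ▸ Or.inr rfl)) hN
  have hAB : Disjoint ({↑w, u, v} : Set V) (insert ↑x (Subtype.val '' Ty)) := by
    refine Set.disjoint_insert_left.mpr ⟨?_, Set.disjoint_of_subset_right
      (Set.insert_subset x.2 (Subtype.coe_image_subset _ _)) disjoint_compl_right⟩
    rintro (h | ⟨z, hz, h⟩)
    exacts [hwx (Subtype.ext h),
      hTwTy_disj.notMem_of_mem_left (hwTw ▸ Or.inl rfl) (Subtype.ext h ▸ hz)]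
  have hunion : ({↑w, u, v} ∪ insert ↑x (Subtype.val '' Ty) : Set V) =
      ({u, v}ᶜ : Set V)ᶜ ∪ (Subtype.val '' Tw ∪ Subtype.val '' Ty) := by
    rw [compl_compl, hwTw, Set.image_pair]
    ext z
    simp only [Set.mem_union, Set.mem_insert_iff, Set.mem_singleton_iff]
    tauto
  exact hmin ▸ treeCoverNumber_le_of_exchange_pair hC' hTw hTy hTwTy hA hB hAB hunion

theorem stmt_15 {V : Type} [Fintype V] (G : SimpleGraph V) (hG : G.Connected) (u v : V)
    (huv : G.Adj u v) (hG' : (G.induce ({u, v}ᶜ : Set V)).Connected)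
    (C' : Finset (Set ({u, v}ᶜ : Set V)))
    (hC' : IsTreeCover (G.induce ({u, v}ᶜ : Set V)) C')
    (hmin : C'.card = treeCoverNumber (G.induce ({u, v}ᶜ : Set V)))
    (w x y : ({u, v}ᶜ : Set V)) (Tw Ty : Set ({u, v}ᶜ : Set V))
    (hTw : Tw ∈ C') (hwTw : Tw = {w, x}) (hwx : w ≠ x)
    (hyw : (G.induce ({u, v}ᶜ : Set V)).Adj w y)
    (hyx : (G.induce ({u, v}ᶜ : Set V)).Adj x y)
    (hTy : Ty ∈ C') (hyTy : y ∈ Ty)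
    (hN : {z | (G.induce ({u, v}ᶜ : Set V)).Adj x z} ∩ Ty = {y})
    (huw : G.Adj u ↑w) (hvw : ¬ G.Adj v ↑w) :
    treeCoverNumber G ≤ treeCoverNumber (G.induce ({u, v}ᶜ : Set V)) :=
  stmt_15_general G u v huv C' hC' hmin w x y Tw Ty hTw hwTw hwx hyw hyx hTy hyTy hN huw hvw
end
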